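/- arXiv:1107.1480 — 2 statements merged into one kernel-verified Lean document; each statement's English description precedes it below -/
import Mathlib

section
/- For every n and every word ω ∈ Ω_{n+1}, one has φ_n(ω)' = φ_n(ω')'; that is, projecting a word and then reducing gives the same result as first reducing the word, then projecting, then reducing. -/
open Classical
noncomputable section

namespace GCG

/-- One-step backtrack reduction of a word: replace some substring `u v u` by `u`. -/
def ReduceStep {V : Type*} (l r : List V) : Prop :=
  ∃ (p s : List V) (u v : V), l = p ++ [u, v, u] ++ s ∧ r = p ++ [u] ++ s

/-- A word is reduced if it admits no one-step reduction. -/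
def IsReduced {V : Type*} (l : List V) : Prop := ∀ r, ¬ ReduceStep l r

/-- The reduction `ω'` of a word: the (for words in a simple graph, unique) reduced
word obtained from it by repeatedly replacing substrings `u v u` by `u`. -/
def reduce {V : Type*} (l : List V) : List V :=
  if h : ∃ r, Relation.ReflTransGen ReduceStep l r ∧ IsReduced r then h.choose else l

/-- Compress every maximal constant substring `u u ⋯ u` to the single letter `u`. -/
def compress {V : Type*} : List V → List V
  | [] => []
  | [a] => [a]
  | a :: b :: t => if a = b then compress (b :: t) else a :: compress (b :: t)

/-- Delete–Replace–Compress along `f`: delete the letters sent into `S`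
(the subdivision points), replace the remaining letters by their images,
and compress maximal constant substrings. -/
def DRC {V' V S : Type*} (f : V' → V ⊕ S) (w : List V') : List V :=
  compress (w.filterMap fun v => (f v).getLeft?)

/-- A word in a simple graph: a finite list of vertices in which consecutive
letters are distinct and joined by an edge. -/
def IsWord {V : Type*} (G : SimpleGraph V) (l : List V) : Prop := l.Chain' G.Adj

/-- A loop word at `x`: a word that starts and ends with `x`. -/
def IsLoopWord {V : Type*} (G : SimpleGraph V) (x : V) (l : List V) : Prop :=
  l.Chain' G.Adj ∧ l.head? = some x ∧ l.getLast? = some x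

/-- Concatenation of loop words: the duplicated base letter is dropped. -/
def lconcat {V : Type*} (ω ξ : List V) : List V := ω.dropLast ++ ξ

/-- `Gs` (on vertex set `V ⊕ S`) is the subdivision of `G` in which every edge is
evenly subdivided into `d` edges: every edge of `G` is replaced by a path of
length `d` through fresh interior vertices from `S`, these paths are compatible
with edge reversal, their interiors are pairwise disjoint, they exhaust `S`, and
their steps are exactly the edges of `Gs`. -/
def IsEvenSubdivision {V S : Type*} (G : SimpleGraph V) (d : ℕ)
    (Gs : SimpleGraph (V ⊕ S)) : Prop :=
  ∃ P : G.Dart → Fin (d + 1) → V ⊕ S,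
    (∀ e, P e 0 = Sum.inl e.toProd.1) ∧
    (∀ e, P e (Fin.last d) = Sum.inl e.toProd.2) ∧
    (∀ e (i : Fin (d + 1)), 0 < i.val → i.val < d → ∃ s : S, P e i = Sum.inr s) ∧
    (∀ e, Function.Injective (P e)) ∧
    (∀ e (i : Fin (d + 1)), P e.symm i = P e i.rev) ∧
    (∀ s : S, ∃ e i, P e i = Sum.inr s) ∧
    (∀ e e' (i i' : Fin (d + 1)), 0 < i.val → i.val < d → P e i = P e' i' →
      (e' = e ∧ i' = i) ∨ (e' = e.symm ∧ i' = i.rev)) ∧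
    (∀ a b, Gs.Adj a b ↔ ∃ e, ∃ i : Fin d, P e i.castSucc = a ∧ P e i.succ = b)

/-- The inverse sequence of finite connected simple graphs `X_n` with even
subdivisions `X*_n` and simplicial bonding surjections `f_n : X_{n+1} → X*_n`
mapping every edge onto an edge, together with coherent base vertices `x_n`. -/
structure GraphTower where
  V : ℕ → Type
  S : ℕ → Type
  finV : ∀ n, Finite (V n)
  G : ∀ n, SimpleGraph (V n)
  conn : ∀ n, (G n).Connected
  d : ℕ → ℕ
  two_le_d : ∀ n, 2 ≤ d n
  Gs : ∀ n, SimpleGraph (V n ⊕ S n)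
  subdiv : ∀ n, IsEvenSubdivision (G n) (d n) (Gs n)
  f : ∀ n, V (n + 1) → V n ⊕ S n
  f_surj : ∀ n, Function.Surjective (f n)
  f_simplicial : ∀ n ⦃u v⦄, (G (n + 1)).Adj u v → (Gs n).Adj (f n u) (f n v)
  f_edge_surj : ∀ n ⦃a b⦄, (Gs n).Adj a b →
    ∃ u v, (G (n + 1)).Adj u v ∧ f n u = a ∧ f n v = b
  x : ∀ n, V n
  f_base : ∀ n, f n (x (n + 1)) = Sum.inl (x n)

namespace GraphTower

/-- The projection `φ_n = DRC_n`. -/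
def phi (T : GraphTower) (n : ℕ) : List (T.V (n + 1)) → List (T.V n) := DRC (T.f n)

/-- The composite projection `φ_n ∘ φ_{n+1} ∘ ⋯ ∘ φ_{n+m-1}` (the identity for `m = 0`). -/
def proj (T : GraphTower) (n : ℕ) : (m : ℕ) → List (T.V (n + m)) → List (T.V n)
  | 0, w => w
  | m + 1, w => T.proj n m (T.phi (n + m) w)

/-- Membership in `Ω = lim←(Ω_n, φ_n)`: a coherent sequence of loop words. -/
def MemOmega (T : GraphTower) (ω : ∀ n, List (T.V n)) : Prop :=
  (∀ n, IsLoopWord (T.G n) (T.x n) (ω n)) ∧ ∀ n, T.phi n (ω (n + 1)) = ω n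

/-- Membership in `G = lim←(Ω'_n, φ'_n)`: a `φ'`-coherent sequence of reduced loop words. -/
def MemG (T : GraphTower) (g : ∀ n, List (T.V n)) : Prop :=
  (∀ n, IsLoopWord (T.G n) (T.x n) (g n) ∧ IsReduced (g n)) ∧
    ∀ n, reduce (T.phi n (g (n + 1))) = g n

/-- A sequence is locally eventually constant if for every fixed level `n` the
unreduced projections of its later terms to level `n` are eventually constant. -/
def LEC (T : GraphTower) (g : ∀ n, List (T.V n)) : Prop :=
  ∀ n, ∃ M, ∀ m, M ≤ m → T.proj n m (g (n + m)) = T.proj n M (g (n + M))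

/-- `ω` is the stabilization `←g` of `g`: for every level `n`, the projections of
the later terms of `g` to level `n` eventually equal `ω n`. -/
def IsStabilization (T : GraphTower) (g ω : ∀ n, List (T.V n)) : Prop :=
  ∀ n, ∃ M, ∀ m, M ≤ m → T.proj n m (g (n + m)) = ω n

/-- The identity word sequence `(x_n)_n`. -/
def seqOne (T : GraphTower) : ∀ n, List (T.V n) := fun n => [T.x n]

/-- Termwise concatenation followed by termwise reduction. -/
def seqMul (T : GraphTower) (g h : ∀ n, List (T.V n)) : ∀ n, List (T.V n) :=
  fun n => reduce (lconcat (g n) (h n))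

/-- Termwise reversal. -/
def seqInv (T : GraphTower) (g : ∀ n, List (T.V n)) : ∀ n, List (T.V n) :=
  fun n => (g n).reverse

/-- Membership in `←𝒢`: the stabilization of some locally eventually constant
element of `G`. -/
def MemSG (T : GraphTower) (ω : ∀ n, List (T.V n)) : Prop :=
  ∃ g, T.MemG g ∧ T.LEC g ∧ T.IsStabilization g ω

/-- `τ = ω ∗ ξ`: termwise concatenation, followed by termwise reduction,
followed by stabilization. -/
def star (T : GraphTower) (ω ξ τ : ∀ n, List (T.V n)) : Prop :=
  T.IsStabilization (fun n => reduce (lconcat (ω n) (ξ n))) τ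

end GraphTower

end GCG

/-!
Backtrack reduction is confluent (overlapping backtracks `u v u` can always be rejoined), so
`reduce` is constant along reduction sequences and it suffices to show that a single backtrack
`u v u ↦ u` in a loop word does not change `φ(·)'`. If `f u` is a vertex of `X_n`, the backtrack
only creates a repeated letter, which compression removes. If `f u` and `f v` are subdivision
points, the backtrack is invisible. In the remaining case `f u` is an interior point of a
subdivided edge and `f v` one of its ends; the last vertex letter `a` before the backtrack and
the first one `a'` after it are reached from `f u` through interior points only, so `a`, `f v`
and `a'` all are ends of that same edge. Two of them coincide, and then the image of the
backtrack is either a repetition or itself a backtrack `a (f v) a`.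
-/

namespace GCG

section Reduction

variable {V : Type*}

theorem ReduceStep.length_lt {l r : List V} (h : ReduceStep l r) : r.length < l.length := by
  obtain ⟨p, s, u, v, rfl, rfl⟩ := h
  simp

theorem ReduceStep.map {V' : Type*} {l r : List V} (h : ReduceStep l r) (f : V → V') :
    ReduceStep (l.map f) (r.map f) := by
  obtain ⟨p, s, u, v, rfl, rfl⟩ := h
  exact ⟨p.map f, s.map f, f u, f v, by simp, by simp⟩

theorem exists_reflTransGen_isReduced (l : List V) :
    ∃ r, Relation.ReflTransGen ReduceStep l r ∧ IsReduced r := by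
  by_cases h : IsReduced l
  · exact ⟨l, .refl, h⟩
  · obtain ⟨r, hr⟩ : ∃ r, ReduceStep l r := by simpa [IsReduced] using h
    obtain ⟨m, hrm, hm⟩ := exists_reflTransGen_isReduced r
    exact ⟨m, .head hr hrm, hm⟩
termination_by l.length
decreasing_by exact hr.length_lt

theorem reflTransGen_reduce (l : List V) : Relation.ReflTransGen ReduceStep l (reduce l) := by
  rw [reduce, dif_pos (exists_reflTransGen_isReduced l)]
  exact (exists_reflTransGen_isReduced l).choose_spec.1

theorem isReduced_reduce (l : List V) : IsReduced (reduce l) := by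
  rw [reduce, dif_pos (exists_reflTransGen_isReduced l)]
  exact (exists_reflTransGen_isReduced l).choose_spec.2

theorem ReduceStep.joinable_of_length_le {p₁ s₁ p₂ s₂ : List V} {u₁ v₁ u₂ v₂ : V}
    (hl : p₁ ++ [u₁, v₁, u₁] ++ s₁ = p₂ ++ [u₂, v₂, u₂] ++ s₂)
    (hlen : p₁.length ≤ p₂.length) :
    ∃ m, Relation.ReflGen ReduceStep (p₁ ++ [u₁] ++ s₁) m ∧
      Relation.ReflGen ReduceStep (p₂ ++ [u₂] ++ s₂) m := by
  obtain ⟨q, rfl⟩ : p₁ <+: p₂ :=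
    List.prefix_of_prefix_length_le
      ⟨[u₁, v₁, u₁] ++ s₁, by rw [← List.append_assoc, hl]⟩
      ⟨[u₂, v₂, u₂] ++ s₂, by rw [← List.append_assoc]⟩ hlen
  have hq : [u₁, v₁, u₁] ++ s₁ = q ++ ([u₂, v₂, u₂] ++ s₂) :=
    List.append_cancel_left (as := p₁) (by simpa using hl)
  -- `q` is the offset between the two backtracks: they coincide, overlap, or are disjoint
  rcases q with _ | ⟨α, _ | ⟨β, _ | ⟨γ, q⟩⟩⟩ <;>
    simp only [List.cons_append, List.nil_append, List.cons.injEq] at hq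
  · obtain ⟨rfl, rfl, -, rfl⟩ := hq
    exact ⟨_, .refl, by simp only [List.append_nil]; exact .refl⟩
  · obtain ⟨rfl, rfl, rfl, rfl⟩ := hq
    exact ⟨_, .refl, by simp only [List.append_assoc, List.cons_append]; exact .refl⟩
  · obtain ⟨rfl, rfl, rfl, rfl⟩ := hq
    exact ⟨p₁ ++ [u₁] ++ s₂, .single ⟨p₁, s₂, u₁, v₂, by simp, rfl⟩,
      .single ⟨p₁, s₂, u₁, v₁, by simp, by simp⟩⟩
  · obtain ⟨rfl, rfl, rfl, rfl⟩ := hq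
    exact ⟨p₁ ++ [u₁] ++ (q ++ [u₂] ++ s₂),
      .single ⟨p₁ ++ [u₁] ++ q, s₂, u₂, v₂, by simp, by simp⟩,
      .single ⟨p₁, q ++ [u₂] ++ s₂, u₁, v₁, by simp, by simp⟩⟩

theorem ReduceStep.joinable {l r₁ r₂ : List V} (h₁ : ReduceStep l r₁)
    (h₂ : ReduceStep l r₂) :
    ∃ m, Relation.ReflGen ReduceStep r₁ m ∧ Relation.ReflGen ReduceStep r₂ m := by
  obtain ⟨p₁, s₁, u₁, v₁, rfl, rfl⟩ := h₁
  obtain ⟨p₂, s₂, u₂, v₂, hl, rfl⟩ := h₂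
  rcases le_total p₁.length p₂.length with h | h
  · exact joinable_of_length_le hl h
  · obtain ⟨m, h₂, h₁⟩ := joinable_of_length_le hl.symm h
    exact ⟨m, h₁, h₂⟩

theorem IsReduced.eq_of_reflTransGen {l r : List V} (hl : IsReduced l)
    (h : Relation.ReflTransGen ReduceStep l r) : l = r := by
  rcases h.cases_head with rfl | ⟨m, hm, -⟩
  · rfl
  · exact absurd hm (hl m)

theorem reduce_eq_of_reflTransGen {l r : List V} (h : Relation.ReflTransGen ReduceStep l r) :
    reduce l = reduce r := by
  obtain ⟨m, hlm, hrm⟩ := Relation.church_rosser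
    (fun _ _ _ h₁ h₂ => (h₁.joinable h₂).imp fun _ hm => ⟨hm.1, hm.2.to_reflTransGen⟩)
    (reflTransGen_reduce l) (h.trans (reflTransGen_reduce r))
  rw [(isReduced_reduce l).eq_of_reflTransGen hlm, (isReduced_reduce r).eq_of_reflTransGen hrm]

theorem IsLoopWord.of_reduceStep {G : SimpleGraph V} {x : V} {l r : List V}
    (hl : IsLoopWord G x l) (h : ReduceStep l r) : IsLoopWord G x r := by
  obtain ⟨p, s, u, v, rfl, rfl⟩ := h
  obtain ⟨hc, hh, hg⟩ := hl
  refine ⟨List.IsChain.append_overlap (hc.infix ⟨[], [v, u] ++ s, by simp⟩)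
    (hc.infix ⟨p ++ [u, v], [], by simp⟩) (by simp), ?_, ?_⟩
  · simpa [List.head?_append] using hh
  · cases s <;> simpa [List.getLast?_append] using hg

theorem IsLoopWord.of_reflTransGen {G : SimpleGraph V} {x : V} {l r : List V}
    (hl : IsLoopWord G x l) (h : Relation.ReflTransGen ReduceStep l r) : IsLoopWord G x r := by
  induction h with
  | refl => exact hl
  | tail _ hstep ih => exact ih.of_reduceStep hstep

end Reduction

section Compress

variable {V : Type*}

theorem compress_cons_cons (a b : V) (t : List V) :
    compress (a :: b :: t) = if a = b then compress (b :: t) else a :: compress (b :: t) := rfl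

theorem compress_cons_self (a : V) (t : List V) :
    compress (a :: a :: t) = compress (a :: t) := by
  rw [compress_cons_cons, if_pos rfl]

theorem compress_cons_of_ne {a b : V} (h : a ≠ b) (t : List V) :
    compress (a :: b :: t) = a :: compress (b :: t) := by
  rw [compress_cons_cons, if_neg h]

theorem exists_compress_cons (a : V) (t : List V) : ∃ t', compress (a :: t) = a :: t' := by
  induction t generalizing a with
  | nil => exact ⟨[], rfl⟩
  | cons b t ih =>
    by_cases h : a = b
    · subst h
      rw [compress_cons_self]
      exact ih a
    · exact ⟨_, compress_cons_of_ne h t⟩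

theorem exists_compress_append_singleton (l : List V) (a : V) :
    ∃ l', compress (l ++ [a]) = l' ++ [a] := by
  induction l with
  | nil => exact ⟨[], rfl⟩
  | cons b l ih =>
    obtain ⟨l', hl'⟩ := ih
    cases l with
    | nil =>
      by_cases h : b = a
      · exact ⟨[], by subst h; exact compress_cons_self b []⟩
      · exact ⟨[b], compress_cons_of_ne h []⟩
    | cons c l =>
      by_cases h : b = c
      · subst h
        exact ⟨l', by simpa only [List.cons_append, compress_cons_self] using hl'⟩
      · refine ⟨b :: l', ?_⟩
        simp only [List.cons_append, compress_cons_of_ne h] at hl' ⊢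
        rw [hl']

theorem compress_append_cons (l m : List V) (a : V) :
    compress (l ++ a :: m) = compress (l ++ [a]) ++ (compress (a :: m)).tail := by
  induction l with
  | nil =>
    obtain ⟨m', hm'⟩ := exists_compress_cons a m
    rw [List.nil_append, List.nil_append, hm']
    rfl
  | cons b l ih =>
    obtain ⟨m', hm'⟩ := exists_compress_cons a m
    cases l with
    | nil =>
      by_cases h : b = a
      · subst h
        simp only [List.nil_append, List.cons_append, compress_cons_self, hm']
        rfl
      · simp only [List.nil_append, List.cons_append, compress_cons_of_ne h, hm']
        rfl
    | cons c l =>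
      by_cases h : b = c
      · subst h
        simpa only [List.cons_append, compress_cons_self] using ih
      · simp only [List.cons_append, compress_cons_of_ne h] at ih ⊢
        rw [ih]

theorem compress_append_cons_cons_self (l m : List V) (a : V) :
    compress (l ++ a :: a :: m) = compress (l ++ a :: m) := by
  rw [compress_append_cons, compress_cons_self, ← compress_append_cons]

theorem reduce_compress_append_cons_cons_cons {l m : List V} {a b c : V}
    (h : a = b ∨ c = b ∨ a = c) :
    reduce (compress (l ++ a :: b :: c :: m)) = reduce (compress (l ++ a :: c :: m)) := by
  by_cases hab : a = b
  · rw [← hab, compress_append_cons_cons_self]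
  by_cases hcb : c = b
  · rw [← hcb, show l ++ a :: c :: c :: m = (l ++ [a]) ++ c :: c :: m by simp,
      compress_append_cons_cons_self]
    simp
  obtain rfl : a = c := by tauto
  obtain ⟨l', hl'⟩ := exists_compress_append_singleton l a
  obtain ⟨m', hm'⟩ := exists_compress_cons a m
  have hbacktrack : compress (l ++ a :: b :: a :: m) = l' ++ [a, b, a] ++ m' := by
    rw [compress_append_cons, compress_cons_of_ne hab, compress_cons_of_ne (Ne.symm hab), hm', hl']
    simp
  have hcollapse : compress (l ++ a :: a :: m) = l' ++ [a] ++ m' := by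
    rw [compress_append_cons_cons_self, compress_append_cons, hm', hl']
    simp
  rw [hbacktrack, hcollapse]
  exact reduce_eq_of_reflTransGen (.single ⟨l', m', a, b, rfl, rfl⟩)

end Compress

section Words

variable {W S : Type*}

theorem exists_split_first_inl {L : List (W ⊕ S)} (h : ∃ a, Sum.inl a ∈ L) :
    ∃ L₁ b L₂, L = L₁ ++ Sum.inl b :: L₂ ∧ ∀ z ∈ L₁, z.isRight := by
  induction L with
  | nil => simp at h
  | cons z L ih =>
    rcases z with b | t
    · exact ⟨[], b, L, rfl, by simp⟩
    · obtain ⟨L₁, b, L₂, rfl, hL₁⟩ := ih (by simpa using h)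
      exact ⟨Sum.inr t :: L₁, b, L₂, rfl, by simpa using hL₁⟩

theorem exists_split_last_inl {L : List (W ⊕ S)} (h : ∃ a, Sum.inl a ∈ L) :
    ∃ L₁ b L₂, L = L₁ ++ Sum.inl b :: L₂ ∧ ∀ z ∈ L₂, z.isRight := by
  obtain ⟨L₁, b, L₂, hL, hL₁⟩ :=
    exists_split_first_inl (L := L.reverse) (by simpa using h)
  refine ⟨L₂.reverse, b, L₁.reverse, ?_, by simpa using hL₁⟩
  simpa using congrArg List.reverse hL

end Words

section Subdivision

variable {W S : Type*} {G : SimpleGraph W} {d : ℕ} {Gs : SimpleGraph (W ⊕ S)}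

theorem val_eq_zero_or_eq_of_path_eq_inl {P : G.Dart → Fin (d + 1) → W ⊕ S}
    (hint : ∀ e (i : Fin (d + 1)), 0 < i.val → i.val < d → ∃ s : S, P e i = Sum.inr s)
    {e : G.Dart} {j : Fin (d + 1)} {c : W} (h : P e j = Sum.inl c) : j.val = 0 ∨ j.val = d := by
  by_contra! hj
  obtain ⟨s, hs⟩ := hint e j (by omega) (by omega)
  simp [hs] at h

theorem IsEvenSubdivision.not_adj_inl_inl (h : IsEvenSubdivision G d Gs) (hd : 2 ≤ d) (a b : W) :
    ¬ Gs.Adj (Sum.inl a) (Sum.inl b) := by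
  obtain ⟨P, -, -, hint, -, -, -, -, hadj⟩ := h
  intro hab
  obtain ⟨e, k, hk, hk'⟩ := (hadj _ _).1 hab
  have h₁ := val_eq_zero_or_eq_of_path_eq_inl hint hk
  have h₂ := val_eq_zero_or_eq_of_path_eq_inl hint hk'
  rw [Fin.val_castSucc] at h₁
  rw [Fin.val_succ] at h₂
  omega

theorem IsEvenSubdivision.exists_edge_ends_of_inr (h : IsEvenSubdivision G d Gs) (t : S) :
    ∃ a b : W, ∀ (ms : List (W ⊕ S)) (c : W), (∀ z ∈ ms, z.isRight) →
      (Sum.inr t :: (ms ++ [Sum.inl c])).IsChain Gs.Adj → c = a ∨ c = b := by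
  obtain ⟨P, h0, hd, hint, -, hsymm, hsurj, hdisj, hadj⟩ := h
  have interior : ∀ e j t, P e j = Sum.inr t → 0 < j.val ∧ j.val < d := fun e j t hj =>
    ⟨Fin.pos_iff_ne_zero.2 (by rintro rfl; simp [h0] at hj),
      Fin.lt_last_iff_ne_last.2 (by rintro rfl; simp [hd] at hj)⟩
  have ends : ∀ e j c, P e j = Sum.inl c → c = e.toProd.1 ∨ c = e.toProd.2 := by
    intro e j c hj
    rcases val_eq_zero_or_eq_of_path_eq_inl hint hj with hj0 | hjd
    · obtain rfl : j = 0 := Fin.ext hj0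
      exact .inl (by simpa [h0] using hj.symm)
    · obtain rfl : j = Fin.last d := Fin.ext hjd
      exact .inr (by simpa [hd] using hj.symm)
  -- path interiors are disjoint, so a neighbour of an interior point of `P e` lies on `P e`
  -- or on `P e.symm`, which is `P e` read backwards
  have along : ∀ e j t b, P e j = Sum.inr t → Gs.Adj (P e j) b → ∃ k, b = P e k := by
    intro e j t b hj hb
    obtain ⟨e', k, hk, rfl⟩ := (hadj _ _).1 hb
    rcases hdisj e e' j k.castSucc (interior e j t hj).1 (interior e j t hj).2 hk.symm
      with ⟨rfl, -⟩ | ⟨rfl, -⟩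
    · exact ⟨k.succ, rfl⟩
    · exact ⟨k.succ.rev, hsymm e k.succ⟩
  obtain ⟨e, i, hi⟩ := hsurj t
  refine ⟨e.toProd.1, e.toProd.2, fun ms c hms hch => ?_⟩
  induction ms generalizing i t with
  | nil =>
    obtain ⟨k, hk⟩ := along e i t _ hi (hi ▸ List.isChain_pair.1 hch)
    exact ends e k c hk.symm
  | cons z ms ih =>
    obtain ⟨t', rfl⟩ : ∃ t', z = Sum.inr t' :=
      Sum.isRight_iff.1 (hms z List.mem_cons_self)
    rw [List.cons_append, List.isChain_cons_cons] at hch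
    obtain ⟨k, hk⟩ := along e i t _ hi (hi ▸ hch.1)
    exact ih t' k hk.symm (fun z hz => hms z (List.mem_cons_of_mem _ hz)) hch.2

theorem IsEvenSubdivision.reduce_compress_eq_of_backtrack_inr_inl
    (h : IsEvenSubdivision G d Gs) {q r : List (W ⊕ S)} {t : S} {w : W}
    (hL : (q ++ [Sum.inr t, Sum.inl w, Sum.inr t] ++ r).IsChain Gs.Adj)
    (hq : ∃ a, Sum.inl a ∈ q) (hr : ∃ a, Sum.inl a ∈ r) :
    reduce (compress ((q ++ [Sum.inr t, Sum.inl w, Sum.inr t] ++ r).filterMap Sum.getLeft?)) =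
      reduce (compress ((q ++ [Sum.inr t] ++ r).filterMap Sum.getLeft?)) := by
  obtain ⟨x, y, hends⟩ := h.exists_edge_ends_of_inr t
  obtain ⟨q₁, a, q₂, rfl, hq₂⟩ := exists_split_last_inl hq
  obtain ⟨r₁, a', r₂, rfl, hr₁⟩ := exists_split_first_inl hr
  have hw : w = x ∨ w = y := hends [] w (by simp) (hL.infix
    ⟨q₁ ++ Sum.inl a :: q₂, Sum.inr t :: (r₁ ++ Sum.inl a' :: r₂), by simp⟩)
  have ha' : a' = x ∨ a' = y := hends r₁ a' hr₁ (hL.infix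
    ⟨q₁ ++ Sum.inl a :: q₂ ++ [Sum.inr t, Sum.inl w], r₂, by simp⟩)
  have ha : a = x ∨ a = y := by
    refine hends q₂.reverse a (by simpa using hq₂) ?_
    have hchain : (Sum.inl a :: (q₂ ++ [Sum.inr t])).IsChain Gs.Adj :=
      hL.infix ⟨q₁, Sum.inl w :: Sum.inr t :: (r₁ ++ Sum.inl a' :: r₂), by simp⟩
    simpa using List.isChain_reverse.2 (hchain.imp fun _ _ h => h.symm)
  have hq₂' : q₂.filterMap Sum.getLeft? = [] :=
    List.filterMap_eq_nil_iff.2 fun z hz => Sum.getLeft?_eq_none_iff.2 (hq₂ z hz)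
  have hr₁' : r₁.filterMap Sum.getLeft? = [] :=
    List.filterMap_eq_nil_iff.2 fun z hz => Sum.getLeft?_eq_none_iff.2 (hr₁ z hz)
  have key := reduce_compress_append_cons_cons_cons (l := q₁.filterMap Sum.getLeft?)
    (m := r₂.filterMap Sum.getLeft?) (a := a) (b := w) (c := a') (by
      rcases hw with rfl | rfl <;> rcases ha with rfl | rfl <;> rcases ha' with rfl | rfl <;> simp)
  simpa [List.filterMap_cons, hq₂', hr₁'] using key

theorem IsEvenSubdivision.reduce_compress_eq_of_reduceStep (h : IsEvenSubdivision G d Gs)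
    (hd : 2 ≤ d) {L L' : List (W ⊕ S)} (hL : L.IsChain Gs.Adj)
    (hhead : ∃ a, L.head? = some (Sum.inl a)) (hlast : ∃ a, L.getLast? = some (Sum.inl a))
    (hLL' : ReduceStep L L') :
    reduce (compress (L.filterMap Sum.getLeft?)) =
      reduce (compress (L'.filterMap Sum.getLeft?)) := by
  obtain ⟨q, r, α, β, rfl, rfl⟩ := hLL'
  have hαβ : Gs.Adj α β := List.isChain_pair.1 (hL.infix ⟨q, α :: r, by simp⟩)
  rcases α with a | t <;> rcases β with w | t'
  · exact absurd hαβ (h.not_adj_inl_inl hd a w)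
  · simpa [List.filterMap_cons] using congrArg reduce (compress_append_cons_cons_self _ _ a)
  · refine h.reduce_compress_eq_of_backtrack_inr_inl hL ?_ ?_
    · obtain ⟨a₀, ha₀⟩ := hhead
      have hq : q ≠ [] := by rintro rfl; simp at ha₀
      rw [List.append_assoc, List.head?_append_of_ne_nil _ hq] at ha₀
      exact ⟨a₀, List.mem_of_mem_head? ha₀⟩
    · obtain ⟨a₁, ha₁⟩ := hlast
      have hr : r ≠ [] := by
        rintro rfl
        rw [List.append_nil, List.getLast?_append] at ha₁
        simp at ha₁
      rw [List.getLast?_append_of_ne_nil _ hr] at ha₁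
      exact ⟨a₁, List.mem_of_getLast? ha₁⟩
  · simp [List.filterMap_cons]

theorem IsEvenSubdivision.reduce_DRC_eq_of_reflTransGen {V' : Type*} {G' : SimpleGraph V'}
    (h : IsEvenSubdivision G d Gs) (hd : 2 ≤ d) {f : V' → W ⊕ S}
    (hf : ∀ ⦃u v⦄, G'.Adj u v → Gs.Adj (f u) (f v)) {x : V'} {y : W} (hx : f x = Sum.inl y)
    {l r : List V'} (hl : IsLoopWord G' x l) (hlr : Relation.ReflTransGen ReduceStep l r) :
    reduce (DRC f l) = reduce (DRC f r) := by
  induction hlr with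
  | refl => rfl
  | @tail m m' hlm hmm' ih =>
    obtain ⟨hchain, hhead, hlast⟩ := hl.of_reflTransGen hlm
    have hDRC : ∀ k : List V', DRC f k = compress ((k.map f).filterMap Sum.getLeft?) :=
      fun k => by rw [DRC, List.filterMap_map]; rfl
    rw [ih, hDRC, hDRC]
    exact h.reduce_compress_eq_of_reduceStep hd (List.isChain_map_of_isChain f hf hchain)
      ⟨y, by simp [hhead, hx]⟩ ⟨y, by simp [hlast, hx]⟩ (hmm'.map f)

end Subdivision

/-- For every `n` and every `ω ∈ Ω_{n+1}`, `φ_n(ω)' = φ_n(ω')'`. -/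
theorem statement_1 (T : GraphTower) (n : ℕ) (ω : List (T.V (n + 1)))
    (hω : IsLoopWord (T.G (n + 1)) (T.x (n + 1)) ω) :
    reduce (T.phi n ω) = reduce (T.phi n (reduce ω)) :=
  (T.subdiv n).reduce_DRC_eq_of_reflTransGen (T.two_le_d n) (T.f_simplicial n) (T.f_base n) hω
    (reflTransGen_reduce ω)
end GCG
end
end

section
/- For every n and all loop words ω, ξ ∈ Ω_{n+1}, one has φ_n(ωξ) = φ_n(ω)φ_n(ξ); that is, the projection φ_n = DRC_n is compatible with concatenation of loop words. -/
open Classical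
noncomputable section

namespace GCG

lemma compress_cons_ne_nil {V : Type*} (a : V) (l : List V) : compress (a :: l) ≠ [] := by
  induction l generalizing a with
  | nil => simp [compress]
  | cons b t ih =>
    rw [compress]
    split
    · exact ih b
    · simp

/-- Compression is local: a letter `x` separates the runs on its two sides. -/
lemma compress_append_cons_s6 {V : Type*} (A : List V) (x : V) (B : List V) :
    compress (A ++ x :: B) = lconcat (compress (A ++ [x])) (compress (x :: B)) := by
  unfold lconcat
  induction A with
  | nil => simp [compress]
  | cons a A' ih =>
    cases A' with
    | nil =>
      simp only [List.nil_append, List.cons_append]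
      rw [compress, compress]
      split <;> simp [compress]
    | cons b A'' =>
      simp only [List.cons_append] at ih ⊢
      rw [compress, compress]
      split
      · exact ih
      · obtain ⟨c, L, hcL⟩ := List.exists_cons_of_ne_nil (compress_cons_ne_nil b (A'' ++ [x]))
        rw [ih, hcL]
        simp

lemma DRC_lconcat {V' V S : Type*} (f : V' → V ⊕ S) {ω ξ : List V'} {x : V'} {y : V}
    (hω : ω.getLast? = some x) (hξ : ξ.head? = some x) (hx : f x = Sum.inl y) :
    DRC f (lconcat ω ξ) = lconcat (DRC f ω) (DRC f ξ) := by
  obtain ⟨A, rfl⟩ := List.getLast?_eq_some_iff.1 hω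
  obtain ⟨B, rfl⟩ := List.head?_eq_some_iff.1 hξ
  have hy : (f x).getLeft? = some y := by rw [hx]; rfl
  simp only [DRC, lconcat, List.dropLast_concat, List.filterMap_append, List.filterMap_cons,
    hy, List.filterMap_nil]
  exact compress_append_cons_s6 _ y _

/-- For every `n` and all loop words `ω, ξ ∈ Ω_{n+1}`,
`φ_n(ωξ) = φ_n(ω)φ_n(ξ)`. -/
theorem statement_6 (T : GraphTower) (n : ℕ) (ω ξ : List (T.V (n + 1)))
    (hω : IsLoopWord (T.G (n + 1)) (T.x (n + 1)) ω)
    (hξ : IsLoopWord (T.G (n + 1)) (T.x (n + 1)) ξ) :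
    T.phi n (lconcat ω ξ) = lconcat (T.phi n ω) (T.phi n ξ) :=
  DRC_lconcat (T.f n) hω.2.2 hξ.2.1 (T.f_base n)

end GCG
end
end
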